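/- Let X := {x_r : r ∈ ℝ} ∪ {y_r : r ∈ ℝ} ∪ {s, t} (formally, the type (ℝ × Bool) ⊕ Bool of generators). For a finite tuple r̄ = (r_1, …, r_d) of real numbers define, in the free group on X, v_{r̄} := x_{r_d}^{-1} ⋯ x_{r_1}^{-1} · s · x_{r_1} ⋯ x_{r_d} and w_{r̄} := y_{r_d}^{-1} ⋯ y_{r_1}^{-1} · t · y_{r_1} ⋯ y_{r_d}. Then for every set S of finite real tuples and every finite real tuple r̄, the images of v_{r̄} and w_{r̄} in the presented group ⟨X | {v_{s̄} · w_{s̄}^{-1} : s̄ ∈ S}⟩ are equal if and only if r̄ ∈ S. -/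

import Mathlib

/-- The generating set `X = {x_r : r ∈ ℝ} ∪ {y_r : r ∈ ℝ} ∪ {s, t}`:
`Sum.inl (r, true)` is `x_r`, `Sum.inl (r, false)` is `y_r`,
`Sum.inr true` is `s`, and `Sum.inr false` is `t`. -/
abbrev Gen16 : Type := (ℝ × Bool) ⊕ Bool

def xgen (r : ℝ) : FreeGroup Gen16 := FreeGroup.of (Sum.inl (r, true))
def ygen (r : ℝ) : FreeGroup Gen16 := FreeGroup.of (Sum.inl (r, false))
def sgen : FreeGroup Gen16 := FreeGroup.of (Sum.inr true)
def tgen : FreeGroup Gen16 := FreeGroup.of (Sum.inr false)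

/-- The word `v_{r̄} := x_{r_d}⁻¹ ⋯ x_{r_1}⁻¹ · s · x_{r_1} ⋯ x_{r_d}`. -/
def vword (r : List ℝ) : FreeGroup Gen16 :=
  ((r.map xgen).prod)⁻¹ * sgen * (r.map xgen).prod

/-- The word `w_{r̄} := y_{r_d}⁻¹ ⋯ y_{r_1}⁻¹ · t · y_{r_1} ⋯ y_{r_d}`. -/
def wword16 (r : List ℝ) : FreeGroup Gen16 :=
  ((r.map ygen).prod)⁻¹ * tgen * (r.map ygen).prod

/-- The relator set `{v_{s̄}·w_{s̄}⁻¹ : s̄ ∈ S}` for a set `S` of finite real tuples. -/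
def rels16 (S : Set (List ℝ)) : Set (FreeGroup Gen16) :=
  {g | ∃ sb ∈ S, g = vword sb * (wword16 sb)⁻¹}

/-!
Send `x_r, s` to `some r, none` in one copy of `F = FreeGroup (Option ℝ)` and `y_r, t` to the same
elements of a second copy, amalgamated along the subgroup generated by the conjugates
`p_s̄⁻¹ * z * p_s̄` (`s̄ ∈ S`), where `z = of none` and `p_s̄` is the positive word of `s̄`.
This kills the relators, and `v_r̄, w_r̄` go to the two copies of `p_r̄⁻¹ * z * p_r̄`. These
coincide iff that element is in the amalgamated subgroup, which happens iff `r̄ ∈ S`, because the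
conjugates of `z` by distinct words of `FreeGroup ℝ` are free generators: the semidirect product
`FreeGroup (FreeGroup ℝ) ⋊ FreeGroup ℝ` receives `F` with `z ↦ of 1`, and sends `p⁻¹ * z * p` to
the free generator `of p⁻¹`.
-/

namespace FreeGroup

variable {α β : Type*}

theorem toWord_prod_map_of [DecidableEq α] (l : List α) :
    ((l.map of).prod).toWord = l.map (·, true) := by
  have hmk : (l.map of).prod = mk (l.map (·, true)) := by
    induction l with
    | nil => rfl
    | cons a l ih => rw [List.map_cons, List.prod_cons, ih, of, mul_mk]; rfl
  have hred : IsReduced (l.map (·, true)) := by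
    simp only [IsReduced, List.isChain_map]
    exact List.isChain_iff_getElem.mpr fun _ _ _ => trivial
  rw [hmk, toWord_mk, hred.reduce_eq]

theorem prod_map_of_injective : Function.Injective fun l : List α => (l.map of).prod :=
  fun l₁ l₂ h => by
    classical
    refine List.map_injective_iff.2
      (fun a b (hab : (a, true) = (b, true)) => congrArg Prod.fst hab) ?_
    simpa only [toWord_prod_map_of] using congrArg toWord h

theorem of_mem_range_map_iff {f : α → β} {b : β} :
    of b ∈ (map f).range ↔ b ∈ Set.range f := by
  classical
  refine ⟨fun ⟨x, hx⟩ => ?_, fun ⟨a, ha⟩ => ⟨of a, by rw [map.of, ha]⟩⟩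
  -- `retract` kills the generators outside `range f` and fixes the image of `map f`.
  let retract : FreeGroup β →* FreeGroup β :=
    lift fun b => if b ∈ Set.range f then of b else 1
  have hfix : retract.comp (map f) = map f :=
    ext_hom _ _ fun a => by simp [retract]
  by_contra hb
  have h1 : retract (of b) = 1 := by simp only [retract, lift_apply_of, if_neg hb]
  rw [← hx, ← MonoidHom.comp_apply, hfix, hx] at h1
  exact of_ne_one b h1

def permCongrHom : Equiv.Perm α →* MulAut (FreeGroup α) where
  toFun := freeGroupCongr
  map_one' := freeGroupCongr_refl
  map_mul' σ τ := (freeGroupCongr_trans τ σ).symm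

def conjByWords : FreeGroup (FreeGroup α) →* FreeGroup (Option α) :=
  lift fun p => (map some p)⁻¹ * of none * map some p

def toSemidirectProduct : FreeGroup (Option α) →*
    FreeGroup (FreeGroup α) ⋊[permCongrHom.comp (MulAction.toPermHom _ _)] FreeGroup α :=
  lift fun o => o.elim (SemidirectProduct.inl (of 1)) fun a => SemidirectProduct.inr (of a)

theorem toSemidirectProduct_comp_conjByWords :
    toSemidirectProduct.comp conjByWords =
      SemidirectProduct.inl.comp (map fun p : FreeGroup α => p⁻¹) := by
  have hsome : (toSemidirectProduct (α := α)).comp (map some) = SemidirectProduct.inr :=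
    ext_hom _ _ fun a => by simp [toSemidirectProduct]
  refine ext_hom _ _ fun p => ?_
  have hp : toSemidirectProduct (map some p) = SemidirectProduct.inr p :=
    DFunLike.congr_fun hsome p
  have hnone : toSemidirectProduct (of (none : Option α)) = SemidirectProduct.inl (of 1) :=
    lift_apply_of
  simp only [MonoidHom.comp_apply, conjByWords, lift_apply_of, map.of, _root_.map_mul,
    _root_.map_inv, hp]
  rw [hnone, ← _root_.map_inv, ← SemidirectProduct.inl_aut_inv]
  simp [permCongrHom, freeGroupCongr]

theorem conjByWords_injective : Function.Injective (conjByWords (α := α)) := by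
  have h : Function.Injective ((toSemidirectProduct (α := α)).comp conjByWords) := by
    rw [toSemidirectProduct_comp_conjByWords]
    exact SemidirectProduct.inl_injective.comp (map_injective inv_injective)
  exact h.of_comp (f := toSemidirectProduct)

end FreeGroup

theorem Monoid.PushoutI.of_eq_of_iff_mem_range {ι H G : Type*} [Group H] [Group G] {φ : H →* G}
    (hφ : Function.Injective φ) {i j : ι} (hij : i ≠ j) {g : G} :
    of (φ := fun _ => φ) i g = of j g ↔ g ∈ φ.range := by
  constructor
  · intro h
    have hmem : of (φ := fun _ => φ) i g ∈ (of i).range ⊓ (of j).range :=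
      ⟨⟨g, rfl⟩, ⟨g, h.symm⟩⟩
    rw [inf_of_range_eq_base_range (fun _ => hφ) hij] at hmem
    obtain ⟨k, hk⟩ := hmem
    refine ⟨k, of_injective (fun _ => hφ) i ?_⟩
    rw [of_apply_eq_base, hk]
  · rintro ⟨k, rfl⟩
    rw [of_apply_eq_base, of_apply_eq_base]

open FreeGroup Monoid

section

variable (S : Set (List ℝ))

def conjByMembers : FreeGroup S →* FreeGroup (Option ℝ) :=
  conjByWords.comp (map fun s : S => (s.1.map of).prod)

theorem conjByMembers_injective : Function.Injective (conjByMembers S) :=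
  conjByWords_injective.comp (map_injective (prod_map_of_injective.comp Subtype.val_injective))

theorem conjByWords_mem_range_conjByMembers_iff (r : List ℝ) :
    conjByWords (of (r.map of).prod) ∈ (conjByMembers S).range ↔ r ∈ S := by
  rw [conjByMembers, MonoidHom.range_comp, Subgroup.mem_map_iff_mem conjByWords_injective,
    of_mem_range_map_iff]
  exact ⟨fun ⟨s, hs⟩ => prod_map_of_injective hs ▸ s.2, fun hr => ⟨⟨r, hr⟩, rfl⟩⟩

abbrev Amalgam : Type := PushoutI fun _ : Bool => conjByMembers S

def toAmalgam : Gen16 → Amalgam S :=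
  Sum.elim (fun p => PushoutI.of p.2 (of (some p.1))) fun b => PushoutI.of b (of none)

theorem lift_toAmalgam_conj (b : Bool) (r : List ℝ) :
    lift (toAmalgam S)
        ((r.map fun a => of (Sum.inl (a, b))).prod⁻¹ * of (Sum.inr b) *
          (r.map fun a => of (Sum.inl (a, b))).prod) =
      PushoutI.of b (conjByWords (of (r.map of).prod)) := by
  simp [conjByWords, map_list_prod, List.map_map, Function.comp_def, toAmalgam]

theorem lift_toAmalgam_vword (r : List ℝ) :
    lift (toAmalgam S) (vword r) = PushoutI.of true (conjByWords (of (r.map of).prod)) :=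
  lift_toAmalgam_conj S true r

theorem lift_toAmalgam_wword16 (r : List ℝ) :
    lift (toAmalgam S) (wword16 r) = PushoutI.of false (conjByWords (of (r.map of).prod)) :=
  lift_toAmalgam_conj S false r

theorem lift_toAmalgam_vword_eq_wword16_iff (r : List ℝ) :
    lift (toAmalgam S) (vword r) = lift (toAmalgam S) (wword16 r) ↔ r ∈ S := by
  rw [lift_toAmalgam_vword, lift_toAmalgam_wword16,
    PushoutI.of_eq_of_iff_mem_range (conjByMembers_injective S) (by decide),
    conjByWords_mem_range_conjByMembers_iff]

theorem lift_toAmalgam_rels16 : ∀ g ∈ rels16 S, lift (toAmalgam S) g = 1 := by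
  rintro _ ⟨s, hs, rfl⟩
  rw [_root_.map_mul, _root_.map_inv, mul_inv_eq_one]
  exact (lift_toAmalgam_vword_eq_wword16_iff S s).2 hs

end

/-- In the presented group `⟨X | {v_{s̄}·w_{s̄}⁻¹ : s̄ ∈ S}⟩`, the images of `v_{r̄}`
and `w_{r̄}` coincide if and only if `r̄ ∈ S`. -/
theorem vword_eq_wword_iff_mem (S : Set (List ℝ)) (r : List ℝ) :
    PresentedGroup.mk (rels16 S) (vword r) = PresentedGroup.mk (rels16 S) (wword16 r) ↔
      r ∈ S := by
  refine ⟨fun h => (lift_toAmalgam_vword_eq_wword16_iff S r).1 ?_,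
    fun hr => PresentedGroup.mk_eq_mk_of_mul_inv_mem ⟨r, hr, rfl⟩⟩
  exact congrArg (PresentedGroup.toGroup (lift_toAmalgam_rels16 S)) h
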